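/- Let a < b, ρ ∈ (0,1), and let H : [a,b] → [0,∞) be strictly convex, strictly increasing and continuously differentiable, with H(a) > 0 and H'(a) < ρ. Suppose there exist y_tan ∈ (a,b) with H'(y_tan) = H(y_tan)/(y_tan − a), and z_ρ ∈ (a,b) with H'(z_ρ) = ρ, satisfying y_tan < z_ρ < b. Define v(u) = H'(y_tan)·(u−a) for a ≤ u ≤ y_tan, v(u) = H(u) for y_tan ≤ u ≤ z_ρ, and v(u) = ρ·(u − z_ρ) + H(z_ρ) for z_ρ ≤ u ≤ b. Then v is admissible, and v is the unique minimizer of K_{a,b} over all admissible functions. -/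

import Mathlib

/-!
`h_ρ` is strictly convex on `[0, 1]`, and the slope of the profile `v` stays in
`[H'(ytan), ρ] ⊂ (0, 1)`, so for admissible `w` we get `K(w) - K(v) ≥ ∫ h_ρ'(v') (w' - v')`,
strictly unless `w' = v'` a.e., that is unless `w = v`.

The multiplier `Λ = h_ρ' ∘ v'` is continuous and nondecreasing, constant on `[a, ytan]` and zero on
`[zρ, b]`. Integrating by parts against the Stieltjes measure `dΛ`, with `w a = v a = 0` and
`Λ b = 0`, turns `∫ Λ (w' - v')` into `-∫ (w - v) dΛ`, which is nonnegative because `dΛ` is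
carried by `[ytan, zρ]`, where `w ≤ H = v`.
-/

open MeasureTheory

/-- `h_ρ(z) = z log(z/ρ) + (1-z) log((1-z)/(1-ρ))` (with `0 log 0 = 0`,
which holds automatically since `Real.log 0 = 0`). -/
noncomputable def hRho (ρ z : ℝ) : ℝ :=
  z * Real.log (z / ρ) + (1 - z) * Real.log ((1 - z) / (1 - ρ))

/-- `v` is admissible on `[a,b]` with obstacle `H`: differentiable on `[a,b]`,
`v a = 0`, `0 ≤ v' ≤ 1` on `[a,b]`, and `v ≤ H` on `[a,b]`. -/
def Admissible (a b : ℝ) (H v : ℝ → ℝ) : Prop :=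
  DifferentiableOn ℝ v (Set.Icc a b) ∧ v a = 0 ∧
    (∀ u ∈ Set.Icc a b, derivWithin v (Set.Icc a b) u ∈ Set.Icc (0 : ℝ) 1) ∧
    ∀ u ∈ Set.Icc a b, v u ≤ H u

/-- The cost `K_{a,b}(v) = ∫_a^b h_ρ(v'(u)) du`. -/
noncomputable def cost (ρ a b : ℝ) (v : ℝ → ℝ) : ℝ :=
  ∫ u in a..b, hRho ρ (derivWithin v (Set.Icc a b) u)

open Set

noncomputable def hRhoDeriv (ρ z : ℝ) : ℝ :=
  Real.log z - Real.log (1 - z) + (Real.log (1 - ρ) - Real.log ρ)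

section hRho

variable {ρ : ℝ}

lemma hRhoDeriv_self (ρ : ℝ) : hRhoDeriv ρ ρ = 0 := by
  unfold hRhoDeriv; ring

lemma strictMonoOn_hRhoDeriv (ρ : ℝ) : StrictMonoOn (hRhoDeriv ρ) (Ioo 0 1) := by
  intro x hx y hy hxy
  have h₁ : Real.log x < Real.log y := Real.log_lt_log hx.1 hxy
  have h₂ : Real.log (1 - y) < Real.log (1 - x) :=
    Real.log_lt_log (by linarith [hy.2]) (by linarith)
  unfold hRhoDeriv; linarith

lemma hRho_eq (hρ0 : ρ ≠ 0) (hρ1 : 1 - ρ ≠ 0) :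
    hRho ρ = fun z => z * Real.log z + (1 - z) * Real.log (1 - z) +
      ((Real.log (1 - ρ) - Real.log ρ) * z - Real.log (1 - ρ)) := by
  funext z
  have e₁ : z * Real.log (z / ρ) = z * Real.log z - z * Real.log ρ := by
    rcases eq_or_ne z 0 with rfl | hz
    · simp
    · rw [Real.log_div hz hρ0]; ring
  have e₂ : (1 - z) * Real.log ((1 - z) / (1 - ρ)) =
      (1 - z) * Real.log (1 - z) - (1 - z) * Real.log (1 - ρ) := by
    rcases eq_or_ne (1 - z) 0 with hz | hz
    · simp [hz]
    · rw [Real.log_div hz hρ1]; ring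
  unfold hRho; rw [e₁, e₂]; ring

lemma continuous_hRho (hρ0 : ρ ≠ 0) (hρ1 : 1 - ρ ≠ 0) : Continuous (hRho ρ) := by
  rw [hRho_eq hρ0 hρ1]
  have : Continuous fun z : ℝ => (1 - z) * Real.log (1 - z) :=
    Real.continuous_mul_log.comp (continuous_const.sub continuous_id)
  fun_prop

lemma hasDerivAt_hRho (hρ0 : ρ ≠ 0) (hρ1 : 1 - ρ ≠ 0) {z : ℝ} (hz : z ∈ Ioo (0 : ℝ) 1) :
    HasDerivAt (hRho ρ) (hRhoDeriv ρ z) z := by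
  rw [hRho_eq hρ0 hρ1]
  have d₁ := Real.hasDerivAt_mul_log hz.1.ne'
  have d₂ := (Real.hasDerivAt_mul_log (x := 1 - z) (by linarith [hz.2])).comp z
    ((hasDerivAt_id z).const_sub 1)
  have d₃ := ((hasDerivAt_id z).const_mul (Real.log (1 - ρ) - Real.log ρ)).sub_const
    (Real.log (1 - ρ))
  exact ((d₁.add d₂).add d₃).congr_deriv (by simp only [hRhoDeriv]; ring)

lemma strictConvexOn_hRho (hρ0 : 0 < ρ) (hρ1 : ρ < 1) :
    StrictConvexOn ℝ (Icc 0 1) (hRho ρ) := by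
  have hρ0' : ρ ≠ 0 := hρ0.ne'
  have hρ1' : 1 - ρ ≠ 0 := by linarith
  refine StrictMonoOn.strictConvexOn_of_deriv (convex_Icc 0 1)
    (continuous_hRho hρ0' hρ1').continuousOn ?_
  rw [interior_Icc]
  intro x hx y hy hxy
  rw [(hasDerivAt_hRho hρ0' hρ1' hx).deriv, (hasDerivAt_hRho hρ0' hρ1' hy).deriv]
  exact strictMonoOn_hRhoDeriv ρ hx hy hxy

lemma hRho_add_hRhoDeriv_mul_lt (hρ0 : 0 < ρ) (hρ1 : ρ < 1) {y z : ℝ}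
    (hy : y ∈ Ioo (0 : ℝ) 1) (hz : z ∈ Icc (0 : ℝ) 1) (hne : z ≠ y) :
    hRho ρ y + hRhoDeriv ρ y * (z - y) < hRho ρ z := by
  have hd := hasDerivAt_hRho hρ0.ne' (by linarith) hy
  have hy' : y ∈ Icc (0 : ℝ) 1 := Ioo_subset_Icc_self hy
  rcases hne.lt_or_gt with h | h
  · have := (strictConvexOn_hRho hρ0 hρ1).slope_lt_of_hasDerivAt hz hy' h hd
    rw [slope_def_field, div_lt_iff₀ (by linarith)] at this
    linarith
  · have := (strictConvexOn_hRho hρ0 hρ1).lt_slope_of_hasDerivAt hy' hz h hd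
    rw [slope_def_field, lt_div_iff₀ (by linarith)] at this
    linarith

lemma continuousOn_hRhoDeriv (ρ : ℝ) : ContinuousOn (hRhoDeriv ρ) (Ioo 0 1) := by
  unfold hRhoDeriv
  exact ((Real.continuousOn_log.mono fun z hz => hz.1.ne').sub
    (Real.continuousOn_log.comp (continuousOn_const.sub continuousOn_id)
      fun z hz => (sub_pos.2 hz.2).ne')).add continuousOn_const

lemma abs_hRhoDeriv_le_of_mem_Icc {c d y : ℝ} (hc : 0 < c) (hd : d < 1) (hy : y ∈ Icc c d) :
    |hRhoDeriv ρ y| ≤ max |hRhoDeriv ρ c| |hRhoDeriv ρ d| :=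
  have hmono := (strictMonoOn_hRhoDeriv ρ).monotoneOn
  have hy' : y ∈ Ioo 0 1 := ⟨hc.trans_le hy.1, hy.2.trans_lt hd⟩
  abs_le_max_abs_abs (hmono ⟨hc, hy.1.trans_lt hy'.2⟩ hy' hy.1)
    (hmono hy' ⟨hy'.1.trans_le hy.2, hd⟩ hy.2)

end hRho

lemma integrableOn_Ioo_of_norm_le {F : ℝ → ℝ} (hF : Measurable F) {a b C : ℝ}
    (h : ∀ u ∈ Ioo a b, ‖F u‖ ≤ C) : IntegrableOn F (Ioo a b) :=
  Measure.integrableOn_of_bounded measure_Ioo_lt_top.ne hF.aestronglyMeasurable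
    ((ae_restrict_iff' measurableSet_Ioo).2 (Filter.Eventually.of_forall h))

lemma cost_eq_setIntegral_deriv (ρ : ℝ) {a b : ℝ} (hab : a ≤ b) (f : ℝ → ℝ) :
    cost ρ a b f = ∫ u in Ioo a b, hRho ρ (deriv f u) := by
  rw [cost, intervalIntegral.integral_of_le hab, integral_Ioc_eq_integral_Ioo]
  exact setIntegral_congr_fun measurableSet_Ioo fun u hu => by
    rw [derivWithin_of_mem_nhds (Icc_mem_nhds hu.1 hu.2)]

namespace Admissible

variable {a b : ℝ} {H w : ℝ → ℝ}

lemma hasDerivAt (hw : Admissible a b H w) {u : ℝ} (hu : u ∈ Ioo a b) :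
    HasDerivAt w (deriv w u) u :=
  (hw.1.differentiableAt (Icc_mem_nhds hu.1 hu.2)).hasDerivAt

lemma deriv_mem_Icc (hw : Admissible a b H w) {u : ℝ} (hu : u ∈ Ioo a b) :
    deriv w u ∈ Icc (0 : ℝ) 1 := by
  rw [← derivWithin_of_mem_nhds (Icc_mem_nhds hu.1 hu.2)]
  exact hw.2.2.1 u (Ioo_subset_Icc_self hu)

lemma integrableOn_deriv (hw : Admissible a b H w) : IntegrableOn (deriv w) (Ioo a b) :=
  integrableOn_Ioo_of_norm_le (measurable_deriv w) (C := 1) fun _ hu => by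
    rw [Real.norm_eq_abs, abs_le]
    constructor <;> linarith [(hw.deriv_mem_Icc hu).1, (hw.deriv_mem_Icc hu).2]

lemma intervalIntegrable_deriv (hw : Admissible a b H w) {x : ℝ} (hx : x ∈ Icc a b) :
    IntervalIntegrable (deriv w) volume a x :=
  (intervalIntegrable_iff_integrableOn_Ioo_of_le hx.1).2
    (hw.integrableOn_deriv.mono_set (Ioo_subset_Ioo_right hx.2))

lemma integral_deriv (hw : Admissible a b H w) {x : ℝ} (hx : x ∈ Icc a b) :
    ∫ u in a..x, deriv w u = w x := by
  rw [intervalIntegral.integral_eq_sub_of_hasDerivAt_of_le hx.1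
    (hw.1.continuousOn.mono (Icc_subset_Icc_right hx.2))
    (fun u hu => hw.hasDerivAt (Ioo_subset_Ioo_right hx.2 hu)) (hw.intervalIntegrable_deriv hx),
    hw.2.1, sub_zero]

lemma eqOn_of_deriv_ae_eq {K v : ℝ → ℝ} (hw : Admissible a b H w) (hv : Admissible a b K v)
    (h : deriv w =ᵐ[volume.restrict (Ioo a b)] deriv v) :
    EqOn w v (Icc a b) := by
  intro x hx
  rw [← hw.integral_deriv hx, ← hv.integral_deriv hx, intervalIntegral.integral_of_le hx.1,
    intervalIntegral.integral_of_le hx.1, integral_Ioc_eq_integral_Ioo,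
    integral_Ioc_eq_integral_Ioo]
  refine setIntegral_congr_ae measurableSet_Ioo ?_
  filter_upwards [(ae_restrict_iff' measurableSet_Ioo).1 h] with u hu hux
  exact hu (Ioo_subset_Ioo_right hx.2 hux)

end Admissible

theorem setIntegral_hRhoDeriv_mul_sub_lt {ρ a b c d : ℝ} {f g : ℝ → ℝ} (hρ0 : 0 < ρ)
    (hρ1 : ρ < 1) (hc : 0 < c) (hd : d < 1) (hf : Measurable f) (hg : Measurable g)
    (hf01 : ∀ u ∈ Ioo a b, f u ∈ Icc 0 1) (hgcd : ∀ u ∈ Ioo a b, g u ∈ Icc c d)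
    (hne : ¬ f =ᵐ[volume.restrict (Ioo a b)] g) :
    ∫ u in Ioo a b, hRhoDeriv ρ (g u) * (f u - g u) <
      (∫ u in Ioo a b, hRho ρ (f u)) - ∫ u in Ioo a b, hRho ρ (g u) := by
  have hcont := continuous_hRho hρ0.ne' (by linarith : 1 - ρ ≠ 0)
  have hg01 : ∀ u ∈ Ioo a b, g u ∈ Ioo (0 : ℝ) 1 := fun u hu =>
    ⟨hc.trans_le (hgcd u hu).1, (hgcd u hu).2.trans_lt hd⟩
  obtain ⟨M, hM⟩ := isCompact_Icc.exists_bound_of_continuousOn (hcont.continuousOn (s := Icc 0 1))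
  have hint_f : IntegrableOn (fun u => hRho ρ (f u)) (Ioo a b) :=
    integrableOn_Ioo_of_norm_le (hcont.measurable.comp hf) fun u hu => hM _ (hf01 u hu)
  have hint_g : IntegrableOn (fun u => hRho ρ (g u)) (Ioo a b) :=
    integrableOn_Ioo_of_norm_le (hcont.measurable.comp hg) fun u hu =>
      hM _ (Icc_subset_Icc hc.le hd.le (hgcd u hu))
  have hint_lin : IntegrableOn (fun u => hRhoDeriv ρ (g u) * (f u - g u)) (Ioo a b) := by
    refine integrableOn_Ioo_of_norm_le (C := max |hRhoDeriv ρ c| |hRhoDeriv ρ d|)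
      (by unfold hRhoDeriv; fun_prop) fun u hu => ?_
    have hΛ := abs_hRhoDeriv_le_of_mem_Icc (ρ := ρ) hc hd (hgcd u hu)
    have hφ : |f u - g u| ≤ 1 := by
      rw [abs_le]
      constructor <;> linarith [(hf01 u hu).1, (hf01 u hu).2, (hg01 u hu).1, (hg01 u hu).2]
    rw [Real.norm_eq_abs, abs_mul]
    nlinarith [abs_nonneg (hRhoDeriv ρ (g u)), abs_nonneg (f u - g u)]
  set B : ℝ → ℝ := fun u => hRho ρ (f u) - hRho ρ (g u) - hRhoDeriv ρ (g u) * (f u - g u)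
  have hB_pos : ∀ u ∈ Ioo a b, f u ≠ g u → 0 < B u := fun u hu hfg => by
    have := hRho_add_hRhoDeriv_mul_lt hρ0 hρ1 (hg01 u hu) (hf01 u hu) hfg
    simp only [B]; linarith
  have hB_nonneg : 0 ≤ᵐ[volume.restrict (Ioo a b)] B :=
    (ae_restrict_iff' measurableSet_Ioo).2 <| Filter.Eventually.of_forall fun u hu => by
      by_cases hfg : f u = g u
      · simp [B, hfg]
      · exact (hB_pos u hu hfg).le
  have hB_int : 0 < ∫ u in Ioo a b, B u := by
    refine (setIntegral_pos_iff_support_of_nonneg_ae hB_nonneg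
      ((hint_f.sub hint_g).sub hint_lin)).2 ?_
    rw [Filter.EventuallyEq, ae_iff, Measure.restrict_apply' measurableSet_Ioo] at hne
    exact (pos_iff_ne_zero.2 hne).trans_le <| measure_mono fun u ⟨hfg, hu⟩ =>
      ⟨(hB_pos u hu hfg).ne', hu⟩
  have hB_eq : ∫ u in Ioo a b, B u = (∫ u in Ioo a b, hRho ρ (f u)) -
      (∫ u in Ioo a b, hRho ρ (g u)) - ∫ u in Ioo a b, hRhoDeriv ρ (g u) * (f u - g u) :=
    (integral_sub (hint_f.sub hint_g) hint_lin).trans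
      (congrArg (· - _) (integral_sub hint_f hint_g))
  linarith

theorem cost_lt_cost_of_setIntegral_hRhoDeriv_mul_nonneg {ρ a b c d : ℝ} {H K v w : ℝ → ℝ}
    (hab : a ≤ b) (hρ0 : 0 < ρ) (hρ1 : ρ < 1) (hc : 0 < c) (hd : d < 1)
    (hv : Admissible a b H v) (hw : Admissible a b K w)
    (hvcd : ∀ u ∈ Ioo a b, deriv v u ∈ Icc c d)
    (hmult : 0 ≤ ∫ u in Ioo a b, hRhoDeriv ρ (deriv v u) * (deriv w u - deriv v u))
    (hne : ∃ u ∈ Icc a b, w u ≠ v u) :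
    cost ρ a b v < cost ρ a b w := by
  have hne' : ¬ deriv w =ᵐ[volume.restrict (Ioo a b)] deriv v := fun h =>
    let ⟨_, hu, hwu⟩ := hne
    hwu (hw.eqOn_of_deriv_ae_eq hv h hu)
  have := setIntegral_hRhoDeriv_mul_sub_lt hρ0 hρ1 hc hd (measurable_deriv w) (measurable_deriv v)
    (fun _ hu => hw.deriv_mem_Icc hu) hvcd hne'
  rw [cost_eq_setIntegral_deriv ρ hab, cost_eq_setIntegral_deriv ρ hab]
  linarith

lemma ConvexOn.add_derivWithin_mul_sub_le {S : Set ℝ} {f : ℝ → ℝ} (hf : ConvexOn ℝ S f)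
    {x y : ℝ} (hx : x ∈ S) (hy : y ∈ S) (hd : DifferentiableWithinAt ℝ f S x) :
    f x + derivWithin f S x * (y - x) ≤ f y := by
  rcases lt_trichotomy y x with hyx | rfl | hxy
  · have := hf.slope_le_derivWithin hy hx hyx hd
    rw [slope_def_field, div_le_iff₀ (by linarith)] at this
    linarith
  · simp
  · have := hf.derivWithin_le_slope hx hy hxy hd
    rw [slope_def_field, le_div_iff₀ (by linarith)] at this
    linarith

lemma HasDerivWithinAt.Icc_of_Icc_of_Icc {f : ℝ → ℝ} {f' a m b u : ℝ} (ham : a ≤ m)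
    (hmb : m ≤ b) (h₁ : u ∈ Icc a m → HasDerivWithinAt f f' (Icc a m) u)
    (h₂ : u ∈ Icc m b → HasDerivWithinAt f f' (Icc m b) u) :
    HasDerivWithinAt f f' (Icc a b) u := by
  rw [← Icc_union_Icc_eq_Icc ham hmb]
  refine HasDerivWithinAt.union ?_ ?_
  · by_cases hu : u ∈ Icc a m
    · exact h₁ hu
    · exact HasFDerivWithinAt.of_notMem_closure (by rwa [closure_Icc])
  · by_cases hu : u ∈ Icc m b
    · exact h₂ hu
    · exact HasFDerivWithinAt.of_notMem_closure (by rwa [closure_Icc])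

namespace StieltjesFunction

variable (G : StieltjesFunction ℝ) {φ ψ : ℝ → ℝ} {a b : ℝ}

/-- Fubini on `{(u, s) | a < u < s ≤ b}`, integrating `φ u` against `du dG(s)`. -/
theorem setIntegral_sub_mul_eq (hφ : IntegrableOn φ (Ioc a b))
    (hψ : ∀ x ∈ Icc a b, ∫ u in a..x, φ u = ψ x - ψ a) :
    ∫ u in Ioc a b, (G b - G u) * φ u = ∫ x in Ioc a b, (ψ x - ψ a) ∂G.measure := by
  have : IsFiniteMeasure (G.measure.restrict (Ioc a b)) :=
    isFiniteMeasure_restrict.2 measure_Ioc_lt_top.ne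
  set F : ℝ → ℝ → ℝ := fun u s => {p : ℝ × ℝ | p.1 < p.2}.indicator (fun p => φ p.1) (u, s)
  have hF : Integrable (Function.uncurry F)
      ((volume.restrict (Ioc a b)).prod (G.measure.restrict (Ioc a b))) :=
    (hφ.comp_fst _).indicator (measurableSet_lt measurable_fst measurable_snd)
  have hF_s : ∀ u ∈ Ioc a b, ∫ s in Ioc a b, F u s ∂G.measure = (G b - G u) * φ u := by
    intro u hu
    have hFu : F u = (Ioi u).indicator fun _ => φ u := by ext s; simp [F, indicator_apply]
    have hset : Ioi u ∩ Ioc a b = Ioc u b := by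
      ext x; simp only [mem_inter_iff, mem_Ioi, mem_Ioc]; grind
    rw [hFu, integral_indicator_const _ _root_.measurableSet_Ioi,
      measureReal_restrict_apply _root_.measurableSet_Ioi, hset, measureReal_def, G.measure_Ioc,
      ENNReal.toReal_ofReal (sub_nonneg.2 (G.mono hu.2)), smul_eq_mul]
  have hF_u : ∀ s ∈ Ioc a b, ∫ u in Ioc a b, F u s = ψ s - ψ a := by
    intro s hs
    have hFs : (F · s) = (Iio s).indicator φ := by ext u; simp [F, indicator_apply]
    have hset : Ioc a b ∩ Iio s = Ioo a s := by
      ext x; simp only [mem_inter_iff, mem_Iio, mem_Ioc, mem_Ioo]; grind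
    rw [hFs, setIntegral_indicator _root_.measurableSet_Iio, hset, ← integral_Ioc_eq_integral_Ioo,
      ← intervalIntegral.integral_of_le hs.1.le, hψ s (Ioc_subset_Icc_self hs)]
  calc ∫ u in Ioc a b, (G b - G u) * φ u
      = ∫ u in Ioc a b, ∫ s in Ioc a b, F u s ∂G.measure :=
        setIntegral_congr_fun _root_.measurableSet_Ioc fun u hu => (hF_s u hu).symm
    _ = ∫ s in Ioc a b, (∫ u in Ioc a b, F u s) ∂G.measure := integral_integral_swap hF
    _ = ∫ x in Ioc a b, (ψ x - ψ a) ∂G.measure :=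
        setIntegral_congr_fun _root_.measurableSet_Ioc hF_u

theorem setIntegral_mul_eq (hab : a ≤ b) (hφ : IntegrableOn φ (Ioc a b))
    (hψ : ∀ x ∈ Icc a b, ∫ u in a..x, φ u = ψ x - ψ a) :
    ∫ u in Ioc a b, G u * φ u = G b * ψ b - G a * ψ a - ∫ x in Ioc a b, ψ x ∂G.measure := by
  have hφ' : IntervalIntegrable φ volume a b :=
    (intervalIntegrable_iff_integrableOn_Ioc_of_le hab).2 hφ
  have hψ_cont : ContinuousOn ψ (Icc a b) := by
    have := intervalIntegral.continuousOn_primitive_interval' hφ' left_mem_uIcc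
    rw [uIcc_of_le hab] at this
    refine (this.add (continuousOn_const (c := ψ a))).congr fun x hx => ?_
    change ψ x = (∫ u in a..x, φ u) + ψ a
    rw [hψ x hx]; ring
  have hψ_int : IntegrableOn ψ (Ioc a b) G.measure :=
    (hψ_cont.integrableOn_compact isCompact_Icc).mono_set Ioc_subset_Icc_self
  have hGφ : IntegrableOn (fun u => (G b - G u) * φ u) (Ioc a b) :=
    hφ.bdd_mul (c := G b - G a) (measurable_const.sub G.mono.measurable).aestronglyMeasurable <|
      (ae_restrict_iff' _root_.measurableSet_Ioc).2 <| Filter.Eventually.of_forall fun u hu => by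
        rw [Real.norm_eq_abs, abs_of_nonneg (sub_nonneg.2 (G.mono hu.2))]
        linarith [G.mono hu.1.le]
  have hφ_int : ∫ u in Ioc a b, φ u = ψ b - ψ a := by
    rw [← intervalIntegral.integral_of_le hab, hψ b (right_mem_Icc.2 hab)]
  have hψ_sub : ∫ x in Ioc a b, (ψ x - ψ a) ∂G.measure =
      (∫ x in Ioc a b, ψ x ∂G.measure) - ψ a * (G b - G a) := by
    rw [integral_sub hψ_int (integrableOn_const measure_Ioc_lt_top.ne), setIntegral_const,
      measureReal_def, G.measure_Ioc, ENNReal.toReal_ofReal (sub_nonneg.2 (G.mono hab)),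
      smul_eq_mul, mul_comm]
  have hsplit : ∫ u in Ioc a b, G u * φ u =
      G b * (∫ u in Ioc a b, φ u) - ∫ u in Ioc a b, (G b - G u) * φ u := by
    rw [← integral_const_mul, ← integral_sub (hφ.const_mul _) hGφ]
    exact setIntegral_congr_fun _root_.measurableSet_Ioc fun u _ => by ring
  rw [hsplit, G.setIntegral_sub_mul_eq hφ hψ, hψ_sub, hφ_int]
  ring

lemma setIntegral_nonpos {y z : ℝ} (hGy : G y = G a) (hGz : G b = G z) (hψ : ∀ s ∈ Icc y z, ψ s ≤ 0) :
    ∫ s in Ioc a b, ψ s ∂G.measure ≤ 0 := by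
  have h₁ : ∀ᵐ s ∂G.measure, s ∉ Ioc a y :=
    measure_eq_zero_iff_ae_notMem.1 (by simp [G.measure_Ioc, hGy])
  have h₂ : ∀ᵐ s ∂G.measure, s ∉ Ioc z b :=
    measure_eq_zero_iff_ae_notMem.1 (by simp [G.measure_Ioc, hGz])
  refine integral_nonpos_of_ae <| (ae_restrict_iff' _root_.measurableSet_Ioc).2 ?_
  filter_upwards [h₁, h₂] with s hs₁ hs₂ hs
  simp only [mem_Ioc, not_and, not_le] at hs hs₁ hs₂
  exact hψ s ⟨(hs₁ hs.1).le, not_lt.1 fun h => (hs₂ h).not_ge hs.2⟩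

end StieltjesFunction

theorem Admissible.setIntegral_mul_deriv_sub_nonneg {a b y z : ℝ} {H K v w : ℝ → ℝ}
    (hab : a ≤ b) (hv : Admissible a b H v) (hw : Admissible a b K w) (G : StieltjesFunction ℝ)
    (hGy : G y = G a) (hGz : G z = 0) (hGb : G b = 0) (hwv : ∀ s ∈ Icc y z, w s ≤ v s) :
    0 ≤ ∫ u in Ioc a b, G u * (deriv w u - deriv v u) := by
  have hφ : IntegrableOn (fun u => deriv w u - deriv v u) (Ioc a b) :=
    (integrableOn_Ioc_iff_integrableOn_Ioo).2 (hw.integrableOn_deriv.sub hv.integrableOn_deriv)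
  have hψ : ∀ x ∈ Icc a b, ∫ u in a..x, (deriv w u - deriv v u) = (w x - v x) - (w a - v a) :=
    fun x hx => by
      rw [intervalIntegral.integral_sub (hw.intervalIntegrable_deriv hx)
        (hv.intervalIntegrable_deriv hx), hw.integral_deriv hx, hv.integral_deriv hx, hw.2.1,
        hv.2.1]
      ring
  have hψ_nonpos := G.setIntegral_nonpos (ψ := fun x => w x - v x) hGy (hGb.trans hGz.symm)
    fun s hs => sub_nonpos.2 (hwv s hs)
  rw [G.setIntegral_mul_eq hab hφ hψ, hGb, hw.2.1, hv.2.1]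
  linarith

noncomputable def tangentProfile (H : ℝ → ℝ) (a b ρ ytan zρ : ℝ) (u : ℝ) : ℝ :=
  if u ≤ ytan then derivWithin H (Icc a b) ytan * (u - a)
  else if u ≤ zρ then H u else ρ * (u - zρ) + H zρ

noncomputable def tangentProfileSlope (H : ℝ → ℝ) (a b ytan zρ u : ℝ) : ℝ :=
  derivWithin H (Icc a b) (max ytan (min zρ u))

section TangentProfile

variable {H : ℝ → ℝ} {a b ρ ytan zρ u : ℝ}

lemma tangentProfile_of_le (hu : u ≤ ytan) :
    tangentProfile H a b ρ ytan zρ u = derivWithin H (Icc a b) ytan * (u - a) := by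
  simp [tangentProfile, hu]

lemma tangentProfile_of_mem_Icc (hay : a < ytan)
    (hy' : derivWithin H (Icc a b) ytan = H ytan / (ytan - a)) (hu : u ∈ Icc ytan zρ) :
    tangentProfile H a b ρ ytan zρ u = H u := by
  rcases hu.1.eq_or_lt with rfl | hyu
  · rw [tangentProfile_of_le le_rfl, hy', div_mul_cancel₀ _ (sub_pos.2 hay).ne']
  · simp [tangentProfile, not_le.2 hyu, hu.2]

lemma tangentProfile_of_ge (hyz : ytan < zρ) (hu : zρ ≤ u) :
    tangentProfile H a b ρ ytan zρ u = ρ * (u - zρ) + H zρ := by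
  rcases hu.eq_or_lt with rfl | hzu
  · simp [tangentProfile, not_le.2 hyz]
  · simp [tangentProfile, not_le.2 (hyz.trans hzu), not_le.2 hzu]

lemma tangentProfileSlope_of_le (hyz : ytan ≤ zρ) (hu : u ≤ ytan) :
    tangentProfileSlope H a b ytan zρ u = derivWithin H (Icc a b) ytan := by
  rw [tangentProfileSlope, min_eq_right (hu.trans hyz), max_eq_left hu]

lemma tangentProfileSlope_of_mem_Icc (hu : u ∈ Icc ytan zρ) :
    tangentProfileSlope H a b ytan zρ u = derivWithin H (Icc a b) u := by
  rw [tangentProfileSlope, min_eq_right hu.2, max_eq_right hu.1]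

lemma tangentProfileSlope_of_ge (hyz : ytan ≤ zρ) (hu : zρ ≤ u) :
    tangentProfileSlope H a b ytan zρ u = derivWithin H (Icc a b) zρ := by
  rw [tangentProfileSlope, min_eq_left hu, max_eq_right hyz]

lemma hasDerivWithinAt_tangentProfile (hH : DifferentiableOn ℝ H (Icc a b))
    (hy : ytan ∈ Ioo a b) (hzb : zρ ≤ b) (hyz : ytan < zρ)
    (hy' : derivWithin H (Icc a b) ytan = H ytan / (ytan - a))
    (hz' : derivWithin H (Icc a b) zρ = ρ) (hu : u ∈ Icc a b) :
    HasDerivWithinAt (tangentProfile H a b ρ ytan zρ) (tangentProfileSlope H a b ytan zρ u)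
      (Icc a b) u := by
  refine HasDerivWithinAt.Icc_of_Icc_of_Icc hy.1.le hy.2.le (fun hu₁ => ?_) fun hu₂ =>
    HasDerivWithinAt.Icc_of_Icc_of_Icc hyz.le hzb (fun hu₂ => ?_) fun hu₃ => ?_
  · rw [tangentProfileSlope_of_le hyz.le hu₁.2]
    exact (((hasDerivAt_id u).sub_const a).const_mul _).hasDerivWithinAt.congr_of_mem
      (fun x hx => by rw [tangentProfile_of_le hx.2]; rfl) hu₁ |>.congr_deriv (mul_one _)
  · rw [tangentProfileSlope_of_mem_Icc hu₂]
    exact ((hH u hu).hasDerivWithinAt.mono (Icc_subset_Icc hy.1.le hzb)).congr_of_mem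
      (fun x hx => tangentProfile_of_mem_Icc hy.1 hy' hx) hu₂
  · rw [tangentProfileSlope_of_ge hyz.le hu₃.1, hz']
    exact ((((hasDerivAt_id u).sub_const zρ).const_mul ρ).add_const (H zρ)).hasDerivWithinAt
      |>.congr_of_mem (fun x hx => by rw [tangentProfile_of_ge hyz hx.1]; rfl) hu₃
      |>.congr_deriv (mul_one _)

lemma deriv_tangentProfile (hH : DifferentiableOn ℝ H (Icc a b)) (hy : ytan ∈ Ioo a b)
    (hzb : zρ ≤ b) (hyz : ytan < zρ) (hy' : derivWithin H (Icc a b) ytan = H ytan / (ytan - a))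
    (hz' : derivWithin H (Icc a b) zρ = ρ) (hu : u ∈ Ioo a b) :
    deriv (tangentProfile H a b ρ ytan zρ) u = tangentProfileSlope H a b ytan zρ u :=
  ((hasDerivWithinAt_tangentProfile hH hy hzb hyz hy' hz' (Ioo_subset_Icc_self hu)).hasDerivAt
    (Icc_mem_nhds hu.1 hu.2)).deriv

lemma tangentProfileSlope_mem_Icc (hHconv : ConvexOn ℝ (Icc a b) H)
    (hH : DifferentiableOn ℝ H (Icc a b)) (hay : a ≤ ytan) (hyz : ytan ≤ zρ) (hzb : zρ ≤ b)
    (hz' : derivWithin H (Icc a b) zρ = ρ) (u : ℝ) :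
    tangentProfileSlope H a b ytan zρ u ∈ Icc (derivWithin H (Icc a b) ytan) ρ := by
  rw [← hz']
  have hsub : Icc ytan zρ ⊆ Icc a b := Icc_subset_Icc hay hzb
  have hu : max ytan (min zρ u) ∈ Icc ytan zρ := (projIcc ytan zρ hyz u).2
  have hmono := hHconv.monotoneOn_derivWithin hH
  exact ⟨hmono (hsub (left_mem_Icc.2 hyz)) (hsub hu) hu.1,
    hmono (hsub hu) (hsub (right_mem_Icc.2 hyz)) hu.2⟩

lemma monotone_tangentProfileSlope (hHconv : ConvexOn ℝ (Icc a b) H)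
    (hH : DifferentiableOn ℝ H (Icc a b)) (hay : a ≤ ytan) (hyz : ytan ≤ zρ) (hzb : zρ ≤ b) :
    Monotone (tangentProfileSlope H a b ytan zρ) := fun x y hxy =>
  hHconv.monotoneOn_derivWithin hH (Icc_subset_Icc hay hzb (projIcc ytan zρ hyz x).2)
    (Icc_subset_Icc hay hzb (projIcc ytan zρ hyz y).2) (max_le_max le_rfl (min_le_min le_rfl hxy))

lemma continuous_tangentProfileSlope (hHC1 : ContDiffOn ℝ 1 H (Icc a b)) (hab : a < b)
    (hay : a ≤ ytan) (hyz : ytan ≤ zρ) (hzb : zρ ≤ b) :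
    Continuous (tangentProfileSlope H a b ytan zρ) :=
  (hHC1.continuousOn_derivWithin (uniqueDiffOn_Icc hab) le_rfl).comp_continuous
    (continuous_const.max (continuous_const.min continuous_id)) fun u =>
      Icc_subset_Icc hay hzb (projIcc ytan zρ hyz u).2

lemma tangentProfile_le (hHconv : ConvexOn ℝ (Icc a b) H) (hH : DifferentiableOn ℝ H (Icc a b))
    (hy : ytan ∈ Ioo a b) (hz : zρ ∈ Icc a b) (hyz : ytan < zρ)
    (hy' : derivWithin H (Icc a b) ytan = H ytan / (ytan - a))
    (hz' : derivWithin H (Icc a b) zρ = ρ) {u : ℝ} (hu : u ∈ Icc a b) :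
    tangentProfile H a b ρ ytan zρ u ≤ H u := by
  have hy₀ : ytan ∈ Icc a b := Ioo_subset_Icc_self hy
  rcases le_or_gt u ytan with huy | hyu
  · have := hHconv.add_derivWithin_mul_sub_le hy₀ hu (hH ytan hy₀)
    have hcy : derivWithin H (Icc a b) ytan * (ytan - a) = H ytan := by
      rw [hy', div_mul_cancel₀ _ (sub_pos.2 hy.1).ne']
    rw [tangentProfile_of_le huy]
    linear_combination this + hcy
  rcases le_or_gt u zρ with huz | hzu
  · exact (tangentProfile_of_mem_Icc hy.1 hy' ⟨hyu.le, huz⟩).le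
  · have := hHconv.add_derivWithin_mul_sub_le hz hu (hH zρ hz)
    rw [tangentProfile_of_ge hyz hzu.le, ← hz']
    linarith

theorem admissible_tangentProfile (hHconv : ConvexOn ℝ (Icc a b) H)
    (hH : DifferentiableOn ℝ H (Icc a b)) (hy : ytan ∈ Ioo a b) (hz : zρ ∈ Icc a b)
    (hyz : ytan < zρ) (hy' : derivWithin H (Icc a b) ytan = H ytan / (ytan - a))
    (hz' : derivWithin H (Icc a b) zρ = ρ) (hc : 0 ≤ derivWithin H (Icc a b) ytan) (hρ1 : ρ ≤ 1) :
    Admissible a b H (tangentProfile H a b ρ ytan zρ) := by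
  have hderiv u (hu : u ∈ Icc a b) :=
    hasDerivWithinAt_tangentProfile hH hy hz.2 hyz hy' hz' hu
  refine ⟨fun u hu => (hderiv u hu).differentiableWithinAt, ?_, fun u hu => ?_,
    fun u hu => tangentProfile_le hHconv hH hy hz hyz hy' hz' hu⟩
  · rw [tangentProfile_of_le hy.1.le, sub_self, mul_zero]
  · rw [(hderiv u hu).derivWithin (uniqueDiffOn_Icc (hy.1.trans hy.2) u hu)]
    have := tangentProfileSlope_mem_Icc hHconv hH hy.1.le hyz.le hz.2 hz' u
    exact ⟨hc.trans this.1, this.2.trans hρ1⟩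

theorem setIntegral_hRhoDeriv_tangentProfile_mul_nonneg (hHconv : ConvexOn ℝ (Icc a b) H)
    (hHC1 : ContDiffOn ℝ 1 H (Icc a b)) (hy : ytan ∈ Ioo a b) (hz : zρ ∈ Icc a b)
    (hyz : ytan < zρ) (hy' : derivWithin H (Icc a b) ytan = H ytan / (ytan - a))
    (hz' : derivWithin H (Icc a b) zρ = ρ) (hc : 0 < derivWithin H (Icc a b) ytan)
    (hρ1 : ρ < 1) {w : ℝ → ℝ} (hw : Admissible a b H w) :
    0 ≤ ∫ u in Ioo a b, hRhoDeriv ρ (deriv (tangentProfile H a b ρ ytan zρ) u) *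
      (deriv w u - deriv (tangentProfile H a b ρ ytan zρ) u) := by
  have hab : a < b := hy.1.trans hy.2
  have hH := hHC1.differentiableOn one_ne_zero
  have hV : ∀ u, tangentProfileSlope H a b ytan zρ u ∈ Ioo 0 1 := fun u => by
    have := tangentProfileSlope_mem_Icc hHconv hH hy.1.le hyz.le hz.2 hz' u
    exact ⟨hc.trans_le this.1, this.2.trans_lt hρ1⟩
  let G : StieltjesFunction ℝ :=
    { toFun := fun u => hRhoDeriv ρ (tangentProfileSlope H a b ytan zρ u)
      mono' := fun x y hxy => (strictMonoOn_hRhoDeriv ρ).monotoneOn (hV x) (hV y)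
        (monotone_tangentProfileSlope hHconv hH hy.1.le hyz.le hz.2 hxy)
      right_continuous' := fun _ => ((continuousOn_hRhoDeriv ρ).comp_continuous
        (continuous_tangentProfileSlope hHC1 hab hy.1.le hyz.le hz.2) hV).continuousWithinAt }
  have hGy : G ytan = G a := congrArg (hRhoDeriv ρ) <| by
    rw [tangentProfileSlope_of_le hyz.le le_rfl, tangentProfileSlope_of_le hyz.le hy.1.le]
  have hG_of_ge {u : ℝ} (hu : zρ ≤ u) : G u = 0 := by
    change hRhoDeriv ρ (tangentProfileSlope H a b ytan zρ u) = 0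
    rw [tangentProfileSlope_of_ge hyz.le hu, hz', hRhoDeriv_self]
  have hv := admissible_tangentProfile hHconv hH hy hz hyz hy' hz' hc.le hρ1.le
  calc 0 ≤ ∫ u in Ioc a b, G u * (deriv w u - deriv (tangentProfile H a b ρ ytan zρ) u) :=
        hv.setIntegral_mul_deriv_sub_nonneg hab.le hw G hGy (hG_of_ge le_rfl) (hG_of_ge hz.2)
          fun s hs => tangentProfile_of_mem_Icc hy.1 hy' hs ▸
            hw.2.2.2 s (Icc_subset_Icc hy.1.le hz.2 hs)
    _ = _ := by
      rw [integral_Ioc_eq_integral_Ioo]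
      exact setIntegral_congr_fun measurableSet_Ioo fun u hu => by
        rw [deriv_tangentProfile hH hy hz.2 hyz hy' hz' hu]

end TangentProfile

theorem stmt5_general (a b ρ ytan zρ : ℝ) (H : ℝ → ℝ) (hab : a < b) (hρ0 : 0 < ρ) (hρ1 : ρ < 1)
    (hHconv : StrictConvexOn ℝ (Set.Icc a b) H)
    (hHmono : StrictMonoOn H (Set.Icc a b))
    (hHC1 : ContDiffOn ℝ 1 H (Set.Icc a b))
    (hHa : 0 < H a)
    (hy : ytan ∈ Set.Ioo a b)
    (hy' : derivWithin H (Set.Icc a b) ytan = H ytan / (ytan - a))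
    (hz : zρ ∈ Set.Ioo a b)
    (hz' : derivWithin H (Set.Icc a b) zρ = ρ)
    (hyz : ytan < zρ) :
    Admissible a b H
      (fun u => if u ≤ ytan then derivWithin H (Set.Icc a b) ytan * (u - a)
        else if u ≤ zρ then H u else ρ * (u - zρ) + H zρ) ∧
    ∀ w : ℝ → ℝ, Admissible a b H w →
      (∃ u ∈ Set.Icc a b, w u ≠ (if u ≤ ytan then derivWithin H (Set.Icc a b) ytan * (u - a)
        else if u ≤ zρ then H u else ρ * (u - zρ) + H zρ)) →
      cost ρ a b
        (fun u => if u ≤ ytan then derivWithin H (Set.Icc a b) ytan * (u - a)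
          else if u ≤ zρ then H u else ρ * (u - zρ) + H zρ) < cost ρ a b w := by
  have hH := hHC1.differentiableOn one_ne_zero
  have hz₀ : zρ ∈ Icc a b := Ioo_subset_Icc_self hz
  have hc : 0 < derivWithin H (Icc a b) ytan := by
    rw [hy']
    exact div_pos (hHa.trans (hHmono (left_mem_Icc.2 hab.le) (Ioo_subset_Icc_self hy) hy.1))
      (sub_pos.2 hy.1)
  have hv := admissible_tangentProfile hHconv.convexOn hH hy hz₀ hyz hy' hz' hc.le hρ1.le
  have hv' (u) (hu : u ∈ Ioo a b) := deriv_tangentProfile hH hy hz.2.le hyz hy' hz' hu ▸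
    tangentProfileSlope_mem_Icc hHconv.convexOn hH hy.1.le hyz.le hz.2.le hz' u
  exact ⟨hv, fun w hw hne => cost_lt_cost_of_setIntegral_hRhoDeriv_mul_nonneg hab.le hρ0 hρ1 hc hρ1
    hv hw hv' (setIntegral_hRhoDeriv_tangentProfile_mul_nonneg hHconv.convexOn hHC1 hy hz₀ hyz hy'
      hz' hc hρ1 hw) hne⟩

theorem stmt5 (a b ρ ytan zρ : ℝ) (H : ℝ → ℝ) (hab : a < b) (hρ0 : 0 < ρ) (hρ1 : ρ < 1)
    (hH0 : ∀ u ∈ Set.Icc a b, 0 ≤ H u)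
    (hHconv : StrictConvexOn ℝ (Set.Icc a b) H)
    (hHmono : StrictMonoOn H (Set.Icc a b))
    (hHC1 : ContDiffOn ℝ 1 H (Set.Icc a b))
    (hHa : 0 < H a)
    (hHa' : derivWithin H (Set.Icc a b) a < ρ)
    (hy : ytan ∈ Set.Ioo a b)
    (hy' : derivWithin H (Set.Icc a b) ytan = H ytan / (ytan - a))
    (hz : zρ ∈ Set.Ioo a b)
    (hz' : derivWithin H (Set.Icc a b) zρ = ρ)
    (hyz : ytan < zρ) :
    Admissible a b H
      (fun u => if u ≤ ytan then derivWithin H (Set.Icc a b) ytan * (u - a)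
        else if u ≤ zρ then H u else ρ * (u - zρ) + H zρ) ∧
    ∀ w : ℝ → ℝ, Admissible a b H w →
      (∃ u ∈ Set.Icc a b, w u ≠ (if u ≤ ytan then derivWithin H (Set.Icc a b) ytan * (u - a)
        else if u ≤ zρ then H u else ρ * (u - zρ) + H zρ)) →
      cost ρ a b
        (fun u => if u ≤ ytan then derivWithin H (Set.Icc a b) ytan * (u - a)
          else if u ≤ zρ then H u else ρ * (u - zρ) + H zρ) < cost ρ a b w :=
  stmt5_general a b ρ ytan zρ H hab hρ0 hρ1 hHconv hHmono hHC1 hHa hy hy' hz hz' hyz
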